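/- For complex numbers z, w with |z|² + |w|² = 1 and 3z² + 1 ≠ 0, the map f(z,w) = (2w³/(3z²+1), (z³+3z)/(3z²+1), √3(wz²−w)/(3z²+1)) satisfies |f₁|² + |f₂|² − |f₃|² = 1. -/

import Mathlib

/-!
After clearing the denominator `|3z² + 1|²` and writing `z' = z̄`, `w' = w̄`, the claim is a
polynomial identity in `z, w, z', w'` whose two sides differ by an explicit multiple of
`z z' + w w' - 1`, so it holds over any commutative ring once `z z' + w w' = 1`.
-/

open ComplexConjugate

theorem hyperquadric_identity_of_mul_add_mul_eq_one {R : Type*} [CommRing R] {z w z' w' : R}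
    (h : z * z' + w * w' = 1) :
    (2 * w ^ 3) * (2 * w' ^ 3) + (z ^ 3 + 3 * z) * (z' ^ 3 + 3 * z')
      - 3 * ((w * z ^ 2 - w) * (w' * z' ^ 2 - w')) = (3 * z ^ 2 + 1) * (3 * z' ^ 2 + 1) := by
  linear_combination (z ^ 2 * z' ^ 2 + 3 * z ^ 2 - 4 * z * z' * w * w' - 8 * z * z'
    + 3 * z' ^ 2 + 4 * w ^ 2 * w' ^ 2 + 4 * w * w' + 1) * h

theorem Complex.normSq_hyperquadric_identity {z w : ℂ} (h : normSq z + normSq w = 1) :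
    normSq (2 * w ^ 3) + normSq (z ^ 3 + 3 * z) - 3 * normSq (w * z ^ 2 - w)
      = normSq (3 * z ^ 2 + 1) := by
  have hconj : z * conj z + w * conj w = 1 := by
    rw [Complex.mul_conj, Complex.mul_conj, ← Complex.ofReal_add, h, Complex.ofReal_one]
  apply Complex.ofReal_injective
  rw [Complex.ofReal_sub, Complex.ofReal_add, Complex.ofReal_mul, Complex.ofReal_ofNat,
    ← Complex.mul_conj, ← Complex.mul_conj, ← Complex.mul_conj, ← Complex.mul_conj]
  simp only [map_mul, map_add, map_sub, map_pow, map_ofNat, map_one]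
  exact hyperquadric_identity_of_mul_add_mul_eq_one hconj

theorem stmt_15 (z w : ℂ) (h : ‖z‖ ^ 2 + ‖w‖ ^ 2 = 1)
    (hden : 3 * z ^ 2 + 1 ≠ 0) :
    ‖2 * w ^ 3 / (3 * z ^ 2 + 1)‖ ^ 2
      + ‖(z ^ 3 + 3 * z) / (3 * z ^ 2 + 1)‖ ^ 2
      - ‖(Real.sqrt 3 : ℂ) * (w * z ^ 2 - w) / (3 * z ^ 2 + 1)‖ ^ 2 = 1 := by
  rw [Complex.sq_norm, Complex.sq_norm] at h
  have hden' : Complex.normSq (3 * z ^ 2 + 1) ≠ 0 := Complex.normSq_eq_zero.not.mpr hden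
  have hsqrt : Complex.normSq ((Real.sqrt 3 : ℂ) * (w * z ^ 2 - w))
      = 3 * Complex.normSq (w * z ^ 2 - w) := by
    rw [Complex.normSq_mul, Complex.normSq_ofReal, Real.mul_self_sqrt (by norm_num)]
  simp only [norm_div, div_pow, Complex.sq_norm, hsqrt]
  rw [← add_div, ← sub_div, div_eq_one_iff_eq hden']
  exact Complex.normSq_hyperquadric_identity h
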